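/- Let 𝒜 be a family of infinite subsets of ℕ. Then 𝒜 is a π-base (i.e., 𝒜 is a π-base of some ultrafilter on ℕ) if and only if for every n with 1 ≤ n < ω and every partition ⟨B_ℓ : ℓ < n⟩ of ℕ into n pairwise disjoint sets, there are A ∈ 𝒜 and ℓ < n such that A ⊆* B_ℓ. -/
import Mathlib

/-- `A ⊆* B`: almost inclusion, i.e. `A \ B` is finite. -/
def AlmostSubset (A B : Set ℕ) : Prop := (A \ B).Finite

/-- `P : Fin n → Set ℕ` is a partition of `B` into pairwise disjoint sets. -/
def IsPartitionOf (B : Set ℕ) (n : ℕ) (P : Fin n → Set ℕ) : Prop :=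
  (⋃ i, P i) = B ∧ ∀ i j : Fin n, i ≠ j → Disjoint (P i) (P j)

/-- The ideal `Id_𝒜`. -/
def IdA (𝒜 : Set (Set ℕ)) : Set (Set ℕ) :=
  {B | ∃ n : ℕ, ∃ P : Fin n → Set ℕ, IsPartitionOf B n P ∧
    ∀ A ∈ 𝒜, ∀ i : Fin n, ¬ AlmostSubset A (P i)}

/-- `𝒜` is a π-base of the ultrafilter `D`. -/
def IsPiBaseOf (𝒜 : Set (Set ℕ)) (D : Ultrafilter ℕ) : Prop :=
  ∀ B ∈ D, ∃ A ∈ 𝒜, AlmostSubset A B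

lemma almostSubset_mono {A B C : Set ℕ} (h : AlmostSubset A B) (hBC : B ⊆ C) :
    AlmostSubset A C :=
  h.subset (Set.diff_subset_diff_right hBC)

/-- Disjointify a finite cover. -/
lemma disjointify {n : ℕ} (g : Fin n → Set ℕ) (hcov : (⋃ i, g i) = Set.univ) :
    ∃ P : Fin n → Set ℕ, IsPartitionOf Set.univ n P ∧ ∀ i, P i ⊆ g i := by
  classical
  refine ⟨fun i => g i \ ⋃ j, ⋃ (_ : j < i), g j, ⟨?_, ?_⟩, fun i => Set.diff_subset⟩
  · apply Set.eq_univ_of_forall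
    intro x
    have hx : x ∈ ⋃ i, g i := hcov ▸ Set.mem_univ x
    obtain ⟨i₀, hi₀⟩ := Set.mem_iUnion.mp hx
    have hne : (Finset.univ.filter (fun i => x ∈ g i)).Nonempty :=
      ⟨i₀, by simp [hi₀]⟩
    set i := (Finset.univ.filter (fun i => x ∈ g i)).min' hne with hi
    refine Set.mem_iUnion.mpr ⟨i, ?_, ?_⟩
    · have := Finset.min'_mem _ hne
      simpa using this
    · intro hmem
      simp only [Set.mem_iUnion] at hmem
      obtain ⟨j, hji, hxj⟩ := hmem
      exact absurd (Finset.min'_le _ j (by simp [hxj])) (not_le.mpr hji)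
  · intro i j hij
    rcases lt_or_gt_of_ne hij with h | h
    · rw [Set.disjoint_left]
      intro x hxi hxj
      exact hxj.2 (Set.mem_iUnion.mpr ⟨i, Set.mem_iUnion.mpr ⟨h, hxi.1⟩⟩)
    · rw [Set.disjoint_right]
      intro x hxj hxi
      exact hxi.2 (Set.mem_iUnion.mpr ⟨j, Set.mem_iUnion.mpr ⟨h, hxj.1⟩⟩)

theorem piBase_iff_partition (𝒜 : Set (Set ℕ)) (h𝒜 : ∀ A ∈ 𝒜, A.Infinite) :
    (∃ D : Ultrafilter ℕ, IsPiBaseOf 𝒜 D) ↔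
      ∀ n : ℕ, 1 ≤ n → ∀ P : Fin n → Set ℕ, IsPartitionOf Set.univ n P →
        ∃ A ∈ 𝒜, ∃ i : Fin n, AlmostSubset A (P i) := by
  constructor
  · rintro ⟨D, hD⟩ n hn P hP
    have huniv : (⋃ i ∈ (Finset.univ : Finset (Fin n)), P i) ∈ D := by
      have : (⋃ i ∈ (Finset.univ : Finset (Fin n)), P i) = Set.univ := by
        simp [hP.1]
      rw [this]; exact Filter.univ_mem
    obtain ⟨i, _, hiD⟩ :=
      (Ultrafilter.finite_biUnion_mem_iff (Finset.univ : Finset (Fin n)).finite_toSet).mp huniv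
    obtain ⟨A, hA, hAP⟩ := hD _ hiD
    exact ⟨A, hA, i, hAP⟩
  · intro hpart
    set Bad : Set (Set ℕ) := {B | ∀ A ∈ 𝒜, ¬ AlmostSubset A B} with hBad
    set S : Set (Set ℕ) := compl '' Bad with hS
    have hne : (Filter.generate S).NeBot := by
      rw [Filter.generate_neBot_iff]
      intro t htS htfin
      by_contra hempty
      rw [Set.not_nonempty_iff_eq_empty] at hempty
      -- enumerate t
      lift t to Finset (Set ℕ) using htfin
      set n := t.card with hn
      set g : Fin n → Set ℕ := fun i => (t.equivFin.symm i : Set ℕ)ᶜ with hg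
      have hgbad : ∀ i, g i ∈ Bad := by
        intro i
        have : ((t.equivFin.symm i : Set ℕ)) ∈ S := htS (t.equivFin.symm i).2
        obtain ⟨B, hB, hBeq⟩ := this
        rw [hg]
        simp only [← hBeq, compl_compl]
        exact hB
      have hcov : (⋃ i, g i) = Set.univ := by
        apply Set.eq_univ_of_forall
        intro x
        have hx : x ∉ ⋂₀ (t : Set (Set ℕ)) := by rw [hempty]; exact not_false
        obtain ⟨s, hst, hxs⟩ := by
          simpa [Set.mem_sInter] using hx
        refine Set.mem_iUnion.mpr ⟨t.equivFin ⟨s, hst⟩, ?_⟩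
        simpa [hg] using hxs
      have hn1 : 1 ≤ n := by
        have hx : (0 : ℕ) ∈ ⋃ i, g i := hcov ▸ Set.mem_univ 0
        obtain ⟨i, -⟩ := Set.mem_iUnion.mp hx
        exact i.pos
      obtain ⟨P, hP, hPg⟩ := disjointify g hcov
      obtain ⟨A, hA, i, hAi⟩ := hpart n hn1 P hP
      exact hgbad i A hA (almostSubset_mono hAi (hPg i))
    refine ⟨Ultrafilter.of (Filter.generate S), ?_⟩
    intro B hB
    by_contra hcon
    push_neg at hcon
    have hBbad : B ∈ Bad := fun A hA => hcon A hA
    have hBc : Bᶜ ∈ Ultrafilter.of (Filter.generate S) :=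
      Ultrafilter.of_le (Filter.generate S) (Filter.mem_generate_of_mem ⟨B, hBbad, rfl⟩)
    have := (Ultrafilter.of (Filter.generate S)).inter_mem hB hBc
    simp at this
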